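/- arXiv:2308.00895 — 2 statements merged into one kernel-verified Lean document; each statement's English description precedes it below -/
import Mathlib

section
/- Let (X, B, P_0) be a probability space, {P_θ : θ ∈ Θ} a family of probability measures each absolutely continuous with respect to P_0, and B_0 ⊆ B a sub-σ-field. Let S_{B_0} = span{E_0[dP_θ/dP_0 | B_0] : θ ∈ Θ} ⊆ L¹(B_0, P_0). Then B_0 is boundedly complete (every bounded B_0-measurable Y with E_θ[Y] = 0 for all θ is P_0-a.s. zero) if and only if S_{B_0} is dense in L¹(B_0, P_0). -/
/-!
Identify `L¹(B₀, P₀)` with `L¹(P₀.trim hB0)`. By Hahn–Banach, the span of the conditional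
likelihood ratios is dense there iff no nonzero continuous functional annihilates it, and every
functional on `L¹` of a finite measure is `f ↦ ∫ Y f` for a bounded `B₀`-measurable `Y`: apply Riesz
representation on `L² ⊆ L¹` to get `Y ∈ L²`, which is bounded by `‖φ‖` because
`|∫ₛ Y| = |φ 𝟙ₛ| ≤ ‖φ‖ P₀(s)`. Pulling out `Y` from the conditional expectation gives
`E₀[Y · E₀[dP_θ/dP₀ | B₀]] = E_θ[Y]`, so the annihilating `Y` are exactly those of bounded
completeness. Conversely, if the span is dense and `Y` is bounded with `E_θ[Y] = 0`, then `Y` is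
orthogonal to the span and `∫ Y² = ∫ Y (Y - g) ≤ ‖Y‖_∞ ‖Y - g‖₁` is arbitrarily small.
-/

open MeasureTheory

open scoped ENNReal

theorem Submodule.exists_separating_of_notMem_topologicalClosure {E : Type*}
    [TopologicalSpace E] [AddCommGroup E] [Module ℝ E] [IsTopologicalAddGroup E]
    [ContinuousSMul ℝ E] [LocallyConvexSpace ℝ E] (S : Submodule ℝ E) {x : E}
    (hx : x ∉ S.topologicalClosure) :
    ∃ φ : E →L[ℝ] ℝ, (∀ y ∈ S, φ y = 0) ∧ φ x ≠ 0 := by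
  obtain ⟨φ, u, hφS, hφx⟩ := geometric_hahn_banach_closed_point
    S.topologicalClosure.convex S.isClosed_topologicalClosure hx
  have hu : 0 < u := by simpa using hφS 0 S.topologicalClosure.zero_mem
  refine ⟨φ, fun y hy => ?_, (hu.trans hφx).ne'⟩
  -- a linear functional bounded above on a subspace vanishes there
  by_contra hφy
  have := hφS _ (S.le_topologicalClosure (S.smul_mem (u / φ y) hy))
  rw [map_smul, smul_eq_mul, div_mul_cancel₀ _ hφy] at this
  exact this.false

section L1

variable {α : Type*} {mα : MeasurableSpace α} {μ : Measure α}

theorem integral_mul_indicatorConstLp (f : α → ℝ) {p : ℝ≥0∞} {s : Set α}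
    (hs : MeasurableSet s) (hμs : μ s ≠ ∞) (c : ℝ) :
    ∫ x, f x * indicatorConstLp p hs hμs c x ∂μ = (∫ x in s, f x ∂μ) * c := by
  rw [← integral_mul_const, ← integral_indicator hs]
  refine integral_congr_ae ?_
  filter_upwards [indicatorConstLp_coeFn (p := p) (hs := hs) (hμs := hμs) (c := c)] with x hx
  by_cases hxs : x ∈ s <;> simp [hx, hxs]

theorem ae_abs_le_of_forall_abs_setIntegral_le [IsFiniteMeasure μ] {f : α → ℝ} {c : ℝ}
    (hf : Integrable f μ) (h : ∀ s, MeasurableSet s → |∫ x in s, f x ∂μ| ≤ c * μ.real s) :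
    ∀ᵐ x ∂μ, |f x| ≤ c := by
  have upper : f ≤ᵐ[μ] fun _ => c :=
    ae_le_of_forall_setIntegral_le hf (integrable_const c) fun s hs _ => by
      simpa [mul_comm] using (abs_le.mp (h s hs)).2
  have lower : (fun x => -f x) ≤ᵐ[μ] fun _ => c :=
    ae_le_of_forall_setIntegral_le hf.neg (integrable_const c) fun s hs _ => by
      simpa [integral_neg, mul_comm] using neg_le.mp (abs_le.mp (h s hs)).1
  filter_upwards [upper, lower] with x hu hl
  exact abs_le.mpr ⟨neg_le.mp hl, hu⟩

theorem L1.exists_L2_apply_indicatorConstLp_eq [IsFiniteMeasure μ]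
    (φ : StrongDual ℝ (Lp ℝ 1 μ)) :
    ∃ G : Lp ℝ 2 μ, ∀ {s : Set α} (hs : MeasurableSet s) (hμs : μ s ≠ ∞) (c : ℝ),
      φ (indicatorConstLp 1 hs hμs c) = (∫ x in s, G x ∂μ) * c := by
  -- Hölder multiplication by `1 ∈ L²` is the continuous inclusion `L² → L¹`
  let ι : Lp ℝ 2 μ →L[ℝ] Lp ℝ 1 μ :=
    (ContinuousLinearMap.mul ℝ ℝ).holderL μ 2 2 1 (Lp.const 2 μ 1)
  have hι : ∀ {s} (hs : MeasurableSet s) (hμs : μ s ≠ ∞) (c : ℝ),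
      ι (indicatorConstLp 2 hs hμs c) = indicatorConstLp 1 hs hμs c := by
    intro s hs hμs c
    refine Lp.ext ?_
    filter_upwards [ContinuousLinearMap.coeFn_holder (r := 1) (ContinuousLinearMap.mul ℝ ℝ)
      (Lp.const 2 μ 1) (indicatorConstLp 2 hs hμs c), Lp.coeFn_const 2 μ (1 : ℝ),
      indicatorConstLp_coeFn (p := 2) (hs := hs) (hμs := hμs) (c := c),
      indicatorConstLp_coeFn (p := 1) (hs := hs) (hμs := hμs) (c := c)] with x h1 h2 h3 h4
    simp only [ι, ContinuousLinearMap.holderL_apply_apply]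
    rw [h1, h2, h3, h4]
    simp
  set G : Lp ℝ 2 μ := (InnerProductSpace.toDual ℝ (Lp ℝ 2 μ)).symm (φ.comp ι)
  have hG : ∀ f : Lp ℝ 2 μ, φ (ι f) = ∫ x, G x * f x ∂μ := by
    intro f
    rw [← ContinuousLinearMap.comp_apply, ← InnerProductSpace.toDual_symm_apply, L2.inner_def]
    simp [G, mul_comm]
  refine ⟨G, fun hs hμs c => ?_⟩
  rw [← hι, hG, integral_mul_indicatorConstLp]

theorem L1.exists_eq_integral_mul_of_strongDual [IsFiniteMeasure μ]
    (φ : StrongDual ℝ (Lp ℝ 1 μ)) :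
    ∃ Y : α → ℝ, StronglyMeasurable Y ∧ (∀ᵐ x ∂μ, |Y x| ≤ ‖φ‖) ∧
      ∀ f : Lp ℝ 1 μ, φ f = ∫ x, Y x * f x ∂μ := by
  obtain ⟨G, hG⟩ := L1.exists_L2_apply_indicatorConstLp_eq φ
  have hbound : ∀ᵐ x ∂μ, |G x| ≤ ‖φ‖ := by
    refine ae_abs_le_of_forall_abs_setIntegral_le
      (memLp_one_iff_integrable.mp ((Lp.memLp G).mono_exponent (by norm_num))) fun s hs => ?_
    have hμs := measure_ne_top μ s
    calc |∫ x in s, G x ∂μ| = ‖φ (indicatorConstLp 1 hs hμs 1)‖ := by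
          rw [hG, mul_one, Real.norm_eq_abs]
      _ ≤ ‖φ‖ * ‖indicatorConstLp 1 hs hμs (1 : ℝ)‖ := φ.le_opNorm _
      _ = ‖φ‖ * μ.real s := by
          rw [norm_indicatorConstLp one_ne_zero ENNReal.one_ne_top]; simp
  have hGinf : MemLp G ∞ μ :=
    memLp_top_of_bound (Lp.aestronglyMeasurable G) _ (by simpa using hbound)
  set Ginf : Lp ℝ ∞ μ := hGinf.toLp G
  set R : StrongDual ℝ (Lp ℝ 1 μ) := (ContinuousLinearMap.mul ℝ ℝ).lpPairing μ ∞ 1 Ginf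
  have hR : ∀ f : Lp ℝ 1 μ, R f = ∫ x, G x * f x ∂μ := fun f => by
    rw [ContinuousLinearMap.lpPairing_eq_integral]
    refine integral_congr_ae ?_
    filter_upwards [hGinf.coeFn_toLp] with x hx
    simp [Ginf, hx]
  refine ⟨G, Lp.stronglyMeasurable G, hbound, fun f => ?_⟩
  rw [← hR]
  refine Lp.induction ENNReal.one_ne_top (fun f => φ f = R f) (fun c s hs hμs => ?_)
    (fun f g _ _ _ hf hg => by simp only [map_add, hf, hg])
    (isClosed_eq φ.continuous R.continuous) f
  simp only [Lp.simpleFunc.coe_indicatorConst, hG, hR, integral_mul_indicatorConstLp]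

theorem L1.topologicalClosure_span_eq_top_of_annihilator [IsFiniteMeasure μ]
    (s : Set (Lp ℝ 1 μ))
    (h : ∀ Y : α → ℝ, StronglyMeasurable Y → (∃ M, ∀ᵐ x ∂μ, |Y x| ≤ M) →
      (∀ F ∈ s, ∫ x, Y x * F x ∂μ = 0) → Y =ᵐ[μ] 0) :
    (Submodule.span ℝ s).topologicalClosure = ⊤ := by
  refine Submodule.eq_top_iff'.mpr fun F => ?_
  by_contra hF
  obtain ⟨φ, hφs, hφF⟩ := (Submodule.span ℝ s).exists_separating_of_notMem_topologicalClosure hF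
  obtain ⟨Y, hYsm, hYbd, hφY⟩ := L1.exists_eq_integral_mul_of_strongDual φ
  have hY0 : Y =ᵐ[μ] 0 := h Y hYsm ⟨_, hYbd⟩ fun G hG =>
    (hφY G).symm.trans (hφs G (Submodule.subset_span hG))
  refine hφF ((hφY F).trans (integral_eq_zero_of_ae ?_))
  filter_upwards [hY0] with x hx
  simp [hx]

theorem exists_mem_span_ae_eq_of_mem_span_toL1 {ι : Type*} {c : ι → α → ℝ}
    (hc : ∀ i, Integrable (c i) μ) {G : Lp ℝ 1 μ}
    (hG : G ∈ Submodule.span ℝ (Set.range fun i => (hc i).toL1 (c i))) :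
    ∃ g ∈ Submodule.span ℝ (Set.range c), G =ᵐ[μ] g := by
  induction hG using Submodule.span_induction with
  | mem G hG =>
    obtain ⟨i, rfl⟩ := hG
    exact ⟨c i, Submodule.subset_span ⟨i, rfl⟩, (hc i).coeFn_toL1⟩
  | zero => exact ⟨0, Submodule.zero_mem _, Lp.coeFn_zero _ _ _⟩
  | add G₁ G₂ _ _ ih₁ ih₂ =>
    obtain ⟨g₁, hg₁, h₁⟩ := ih₁
    obtain ⟨g₂, hg₂, h₂⟩ := ih₂
    exact ⟨g₁ + g₂, Submodule.add_mem _ hg₁ hg₂, (Lp.coeFn_add G₁ G₂).trans (h₁.add h₂)⟩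
  | smul a G _ ih =>
    obtain ⟨g, hg, h⟩ := ih
    exact ⟨a • g, Submodule.smul_mem _ a hg, (Lp.coeFn_smul a G).trans (h.const_smul a)⟩

theorem integral_abs_sub_eq_dist_of_ae_eq {f g : α → ℝ} (hf : Integrable f μ)
    {G : Lp ℝ 1 μ} (hGg : G =ᵐ[μ] g) :
    ∫ x, |f x - g x| ∂μ = dist (hf.toL1 f) G := by
  rw [dist_eq_norm, L1.norm_eq_integral_norm]
  refine integral_congr_ae ?_
  filter_upwards [Lp.coeFn_sub (hf.toL1 f) G, hf.coeFn_toL1, hGg] with x hsub hf' hG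
  rw [hsub, Pi.sub_apply, hf', hG, Real.norm_eq_abs]

theorem L1.exists_mem_span_integral_abs_sub_lt_of_annihilator [IsFiniteMeasure μ]
    {ι : Type*} {c : ι → α → ℝ} (hc : ∀ i, Integrable (c i) μ)
    (h : ∀ Y : α → ℝ, StronglyMeasurable Y → (∃ M, ∀ᵐ x ∂μ, |Y x| ≤ M) →
      (∀ i, ∫ x, Y x * c i x ∂μ = 0) → Y =ᵐ[μ] 0)
    {f : α → ℝ} (hf : Integrable f μ) {ε : ℝ} (hε : 0 < ε) :
    ∃ g ∈ Submodule.span ℝ (Set.range c), Integrable g μ ∧ ∫ x, |f x - g x| ∂μ < ε := by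
  set T := Submodule.span ℝ (Set.range fun i => (hc i).toL1 (c i))
  have hT : T.topologicalClosure = ⊤ := by
    refine L1.topologicalClosure_span_eq_top_of_annihilator _ fun Y hY hbd hY0 => h Y hY hbd
      fun i => (integral_congr_ae ?_).trans (hY0 _ ⟨i, rfl⟩)
    filter_upwards [(hc i).coeFn_toL1] with x hx
    rw [hx]
  have hF : hf.toL1 f ∈ closure (T : Set (Lp ℝ 1 μ)) := by
    rw [← Submodule.topologicalClosure_coe, hT]; trivial
  obtain ⟨G, hGT, hFG⟩ := Metric.mem_closure_iff.mp hF ε hε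
  obtain ⟨g, hg, hGg⟩ := exists_mem_span_ae_eq_of_mem_span_toL1 hc hGT
  exact ⟨g, hg, (L1.integrable_coeFn G).congr hGg,
    (integral_abs_sub_eq_dist_of_ae_eq hf hGg).trans_lt hFG⟩

theorem integrable_and_integral_mul_eq_zero_of_mem_span {Y : α → ℝ}
    (hY : AEStronglyMeasurable Y μ) {M : ℝ} (hbd : ∀ᵐ x ∂μ, |Y x| ≤ M) {s : Set (α → ℝ)}
    (hs : ∀ g ∈ s, Integrable g μ ∧ ∫ x, Y x * g x ∂μ = 0) {g : α → ℝ}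
    (hg : g ∈ Submodule.span ℝ s) :
    Integrable g μ ∧ ∫ x, Y x * g x ∂μ = 0 := by
  have hbd' : ∀ᵐ x ∂μ, ‖Y x‖ ≤ M := by simpa using hbd
  induction hg using Submodule.span_induction with
  | mem g hg => exact hs g hg
  | zero => exact ⟨integrable_zero _ _ _, by simp⟩
  | add g₁ g₂ _ _ ih₁ ih₂ =>
    refine ⟨ih₁.1.add ih₂.1, ?_⟩
    simp only [Pi.add_apply, mul_add]
    rw [integral_add (ih₁.1.bdd_mul hY hbd') (ih₂.1.bdd_mul hY hbd'), ih₁.2, ih₂.2, add_zero]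
  | smul a g _ ih =>
    refine ⟨ih.1.smul a, ?_⟩
    simp only [Pi.smul_apply, smul_eq_mul, mul_left_comm _ a]
    rw [integral_const_mul, ih.2, mul_zero]

theorem ae_eq_zero_of_forall_exists_integral_mul_eq_zero [IsFiniteMeasure μ] {Y : α → ℝ}
    (hY : AEStronglyMeasurable Y μ) {M : ℝ} (hbd : ∀ᵐ x ∂μ, |Y x| ≤ M)
    (happrox : ∀ ε > 0, ∃ g, Integrable g μ ∧ ∫ x, Y x * g x ∂μ = 0 ∧
      ∫ x, |Y x - g x| ∂μ < ε) :
    Y =ᵐ[μ] 0 := by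
  set C := max M 0 + 1
  have hC : 0 < C := by positivity
  have hbdC : ∀ᵐ x ∂μ, ‖Y x‖ ≤ C := by
    filter_upwards [hbd] with x hx
    rw [Real.norm_eq_abs]; linarith [le_max_left M 0]
  have hYint : Integrable Y μ := .of_bound hY C hbdC
  have hsq : ∀ δ > 0, ∫ x, Y x * Y x ∂μ ≤ δ := by
    intro δ hδ
    obtain ⟨g, hg, hYg, hclose⟩ := happrox (δ / C) (by positivity)
    have hYYg : Integrable (fun x => Y x * (Y x - g x)) μ := (hYint.sub hg).bdd_mul hY hbdC
    calc ∫ x, Y x * Y x ∂μ = ∫ x, Y x * (Y x - g x) ∂μ := by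
          simp only [mul_sub]
          rw [integral_sub (hYint.bdd_mul hY hbdC) (hg.bdd_mul hY hbdC), hYg, sub_zero]
      _ ≤ ∫ x, C * |Y x - g x| ∂μ := by
          refine integral_mono_ae hYYg ((hYint.sub hg).abs.const_mul C) ?_
          filter_upwards [hbdC] with x hx
          rw [Real.norm_eq_abs] at hx
          exact (le_abs_self _).trans ((abs_mul _ _).trans_le (by gcongr))
      _ = C * ∫ x, |Y x - g x| ∂μ := integral_const_mul _ _
      _ ≤ C * (δ / C) := by gcongr
      _ = δ := mul_div_cancel₀ δ hC.ne'
  have hsq0 : ∫ x, Y x * Y x ∂μ = 0 :=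
    le_antisymm (le_of_forall_pos_le_add fun δ hδ => by simpa using hsq δ hδ)
      (integral_nonneg fun x => mul_self_nonneg _)
  filter_upwards [(integral_eq_zero_iff_of_nonneg (fun x => mul_self_nonneg (Y x))
    (hYint.bdd_mul hY hbdC)).mp hsq0] with x hx
  exact mul_self_eq_zero.mp hx

end L1

theorem integral_mul_condExp_rnDeriv {α : Type*} {m m0 : MeasurableSpace α} {μ ν : Measure α}
    [IsFiniteMeasure ν] (hνμ : ν ≪ μ) (hm : m ≤ m0) [SigmaFinite (μ.trim hm)]
    {Y : α → ℝ} (hY : StronglyMeasurable[m] Y) {M : ℝ} (hbd : ∀ᵐ x ∂μ, |Y x| ≤ M) :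
    ∫ x, Y x * μ[fun x => (ν.rnDeriv μ x).toReal | m] x ∂μ = ∫ x, Y x ∂ν := by
  have : SigmaFinite μ := SigmaFinite.of_trim hm
  set D : α → ℝ := fun x => (ν.rnDeriv μ x).toReal
  have hD : Integrable D μ := Measure.integrable_toReal_rnDeriv
  have hYD : Integrable (Y * D) μ :=
    hD.bdd_mul (hY.mono hm).aestronglyMeasurable (by simpa using hbd)
  calc ∫ x, Y x * μ[D | m] x ∂μ = ∫ x, μ[Y * D | m] x ∂μ :=
        integral_congr_ae (condExp_mul_of_stronglyMeasurable_left hY hYD hD).symm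
    _ = ∫ x, D x * Y x ∂μ := by rw [integral_condExp hm]; simp only [Pi.mul_apply, mul_comm]
    _ = ∫ x, Y x ∂ν := integral_toReal_rnDeriv_mul hνμ

section Farrell

variable {X Θ : Type*} {m : MeasurableSpace X} {P0 : Measure X} [IsProbabilityMeasure P0]
  {P : Θ → Measure X} [∀ θ, IsProbabilityMeasure (P θ)] {B0 : MeasurableSpace X}

variable (P0 P B0) in
noncomputable def condLikelihoodRatio (θ : Θ) : X → ℝ :=
  P0[fun x => ((P θ).rnDeriv P0 x).toReal | B0]

variable (P0 P B0) in
def BoundedlyComplete : Prop :=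
  ∀ Y : X → ℝ, Measurable[B0] Y → (∃ M : ℝ, ∀ᵐ x ∂P0, |Y x| ≤ M) →
    (∀ θ : Θ, ∫ x, Y x ∂(P θ) = 0) → Y =ᵐ[P0] 0

theorem BoundedlyComplete.exists_mem_span_integral_abs_sub_lt (hac : ∀ θ, P θ ≪ P0)
    (hB0 : B0 ≤ m) (hcomp : BoundedlyComplete P0 P B0) {f : X → ℝ} (hf : Measurable[B0] f)
    (hfint : Integrable f P0) {ε : ℝ} (hε : 0 < ε) :
    ∃ g ∈ Submodule.span ℝ (Set.range (condLikelihoodRatio P0 P B0)),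
      ∫ x, |f x - g x| ∂P0 < ε := by
  set c := condLikelihoodRatio P0 P B0
  have hc : ∀ θ, Integrable (c θ) (P0.trim hB0) := fun θ =>
    integrable_condExp.trim hB0 stronglyMeasurable_condExp
  have hannih : ∀ Y : X → ℝ, StronglyMeasurable[B0] Y →
      (∃ M, ∀ᵐ x ∂P0.trim hB0, |Y x| ≤ M) →
      (∀ θ, ∫ x, Y x * c θ x ∂P0.trim hB0 = 0) → Y =ᵐ[P0.trim hB0] 0 := by
    rintro Y hY ⟨M, hM⟩ hYc
    refine (hY.ae_eq_trim_iff hB0 stronglyMeasurable_const).mpr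
      (hcomp Y hY.measurable ⟨M, ae_of_ae_trim hB0 hM⟩ fun θ => ?_)
    rw [← integral_mul_condExp_rnDeriv (hac θ) hB0 hY (ae_of_ae_trim hB0 hM)]
    exact (integral_trim hB0 (f := fun x => Y x * c θ x)
      (hY.mul stronglyMeasurable_condExp)).trans (hYc θ)
  obtain ⟨g, hg, hgint, hfg⟩ := L1.exists_mem_span_integral_abs_sub_lt_of_annihilator hc
    hannih (hfint.trim hB0 hf.stronglyMeasurable) hε
  refine ⟨g, hg, ?_⟩
  rwa [integral_trim_ae hB0 (f := fun x => |f x - g x|) (continuous_abs.comp_aestronglyMeasurable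
    ((hf.stronglyMeasurable.aestronglyMeasurable).sub hgint.1))]

theorem boundedlyComplete_of_forall_exists_mem_span_integral_abs_sub_lt
    (hac : ∀ θ, P θ ≪ P0) (hB0 : B0 ≤ m)
    (hdense : ∀ f : X → ℝ, Measurable[B0] f → Integrable f P0 → ∀ ε > 0,
      ∃ g ∈ Submodule.span ℝ (Set.range (condLikelihoodRatio P0 P B0)),
        ∫ x, |f x - g x| ∂P0 < ε) :
    BoundedlyComplete P0 P B0 := by
  rintro Y hY ⟨M, hM⟩ hYθ
  have hYsm : StronglyMeasurable[B0] Y := hY.stronglyMeasurable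
  have hYae : AEStronglyMeasurable[m] Y P0 := (hYsm.mono hB0).aestronglyMeasurable
  refine ae_eq_zero_of_forall_exists_integral_mul_eq_zero hYae hM fun ε hε => ?_
  obtain ⟨g, hg, hYg⟩ := hdense Y hY (.of_bound hYae M (by simpa using hM)) ε hε
  have hgY := integrable_and_integral_mul_eq_zero_of_mem_span hYae hM (by
    rintro _ ⟨θ, rfl⟩
    exact ⟨integrable_condExp,
      (integral_mul_condExp_rnDeriv (hac θ) hB0 hYsm hM).trans (hYθ θ)⟩) hg
  exact ⟨g, hgY.1, hgY.2, hYg⟩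

end Farrell

/-- Farrell's characterization for a sub-σ-field `B₀`: `B₀` is boundedly complete
iff the span of the conditional likelihood ratios `E_0[dP_θ/dP_0 | B₀]` is dense
in `L¹(B₀, P_0)`. -/
theorem farrell_subfield_boundedly_complete_iff_dense
    {X : Type*} {m : MeasurableSpace X} {Θ : Type*}
    (P0 : Measure X) [IsProbabilityMeasure P0]
    (P : Θ → Measure X) [∀ θ, IsProbabilityMeasure (P θ)]
    (hac : ∀ θ, P θ ≪ P0)
    (B0 : MeasurableSpace X) (hB0 : B0 ≤ m) :
    (∀ Y : X → ℝ, Measurable[B0] Y → (∃ M : ℝ, ∀ᵐ x ∂P0, |Y x| ≤ M) →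
        (∀ θ : Θ, ∫ x, Y x ∂(P θ) = 0) → Y =ᵐ[P0] 0)
      ↔ (∀ f : X → ℝ, Measurable[B0] f → Integrable f P0 → ∀ ε > 0,
          ∃ g ∈ Submodule.span ℝ
            {h : X → ℝ | ∃ θ : Θ,
              h = P0[fun x => ((P θ).rnDeriv P0 x).toReal | B0]},
            ∫ x, |f x - g x| ∂P0 < ε) := by
  have hspan : {h : X → ℝ | ∃ θ, h = P0[fun x => ((P θ).rnDeriv P0 x).toReal | B0]} =
      Set.range (condLikelihoodRatio P0 P B0) :=
    Set.ext fun _ => exists_congr fun _ => eq_comm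
  rw [hspan]
  exact ⟨fun hcomp f hf hfint ε hε =>
      BoundedlyComplete.exists_mem_span_integral_abs_sub_lt hac hB0 hcomp hf hfint hε,
    boundedlyComplete_of_forall_exists_mem_span_integral_abs_sub_lt hac hB0⟩
end

section
/- Let (X, B, P_0) be a probability space, {P_θ : θ ∈ Θ} a family of probability measures each absolutely continuous w.r.t. P_0, B_0 ⊆ B a sub-σ-field, and (F_k)_{k∈ℕ} an increasing sequence of sub-σ-fields with F_k ⊆ F_{k+1} ⊆ B_0 and σ(⋃_k F_k) = B_0. Assume for every k that S_{F_k} ⊆ S_{B_0}, where S_G = span{E_0[dP_θ/dP_0 | G] : θ ∈ Θ}. Then B_0 is boundedly complete if and only if each F_k is boundedly complete. -/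
/-!
Let `Y` be bounded, `B₀`-measurable and centred under every `P θ`, and write `D θ` for
`dP θ / dP₀`. Pulling `Y` out of a conditional expectation,
`∫ E₀[D θ | B₀] Y dP₀ = ∫ Y dP θ = 0`, so `Y` annihilates `S_{B₀}`. The martingale
`Z k = E₀[Y | F k]` is bounded and `F k`-measurable, and the same pull-out gives
`∫ Z k dP θ = ∫ E₀[D θ | F k] Y dP₀`, which vanishes because `E₀[D θ | F k] ∈ S_{F k} ⊆ S_{B₀}`.
Bounded completeness of `F k` forces `Z k = 0`, and Lévy's upward theorem `Z k → Y` then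
gives `Y = 0`.
-/

open MeasureTheory

namespace MeasureTheory

variable {X : Type*} {m' m m₀ : MeasurableSpace X}

theorem integral_condExp_mul_of_stronglyMeasurable {μ : Measure X} (hm : m ≤ m₀)
    [SigmaFinite (μ.trim hm)] {f g : X → ℝ} (hf : StronglyMeasurable[m] f)
    (hgf : Integrable (g * f) μ) (hg : Integrable g μ) :
    ∫ x, μ[g | m] x * f x ∂μ = ∫ x, g x * f x ∂μ :=
  (integral_congr_ae (condExp_mul_of_stronglyMeasurable_right hf hgf hg)).symm.trans
    (integral_condExp hm)

theorem integrable_condExp_mul_of_stronglyMeasurable {μ : Measure X} {f g : X → ℝ}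
    (hf : StronglyMeasurable[m] f) (hgf : Integrable (g * f) μ) (hg : Integrable g μ) :
    Integrable (μ[g | m] * f) μ :=
  integrable_condExp.congr (condExp_mul_of_stronglyMeasurable_right hf hgf hg)

def integralMulAnnihilator (μ : Measure X) (Y : X → ℝ) : Submodule ℝ (X → ℝ) where
  carrier := {g | Integrable (g * Y) μ ∧ ∫ x, (g * Y) x ∂μ = 0}
  zero_mem' := by simp
  add_mem' {f g} hf hg := by
    rw [Set.mem_ofPred_eq, add_mul, integral_add' hf.1 hg.1, hf.2, hg.2,
      add_zero]
    exact ⟨hf.1.add hg.1, rfl⟩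
  smul_mem' c f hf := by
    rw [Set.mem_ofPred_eq, smul_mul_assoc]
    refine ⟨hf.1.smul c, ?_⟩
    simp only [Pi.smul_apply, integral_smul, hf.2, smul_zero]

variable {μ ν : Measure X} {f : X → ℝ}

theorem integrable_of_ae_abs_le [IsFiniteMeasure μ] (hμν : μ ≪ ν)
    (hf : AEStronglyMeasurable f μ) {C : ℝ} (hfC : ∀ᵐ x ∂ν, |f x| ≤ C) : Integrable f μ :=
  .of_bound hf C (by filter_upwards [hμν.ae_le hfC] with x hx; rwa [Real.norm_eq_abs])

theorem ae_eq_zero_of_forall_condExp_ae_eq_zero [IsFiniteMeasure μ] (ℱ : Filtration ℕ m₀)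
    (hf : Integrable f μ) (hfℱ : StronglyMeasurable[⨆ n, ℱ n] f)
    (hℱf : ∀ n, μ[f | ℱ n] =ᵐ[μ] 0) : f =ᵐ[μ] 0 := by
  filter_upwards [hf.tendsto_ae_condExp hfℱ, ae_all_iff.2 hℱf] with x hx hx0
  simp only [hx0, Pi.zero_apply] at hx
  exact tendsto_nhds_unique hx tendsto_const_nhds

section RadonNikodym

variable [IsFiniteMeasure μ] [IsFiniteMeasure ν]

theorem integral_eq_integral_condExp_rnDeriv_mul (hμν : μ ≪ ν) (hm : m ≤ m₀)
    (hf : StronglyMeasurable[m] f) (hfμ : Integrable f μ) :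
    ∫ x, f x ∂μ = ∫ x, ν[fun x => (μ.rnDeriv ν x).toReal | m] x * f x ∂ν := by
  rw [integral_condExp_mul_of_stronglyMeasurable hm hf
    ((integrable_toReal_rnDeriv_mul_iff hμν).2 hfμ) Measure.integrable_toReal_rnDeriv]
  exact (integral_rnDeriv_smul hμν).symm

theorem integrable_condExp_rnDeriv_mul (hμν : μ ≪ ν) (hf : StronglyMeasurable[m] f)
    (hfμ : Integrable f μ) :
    Integrable (ν[fun x => (μ.rnDeriv ν x).toReal | m] * f) ν :=
  integrable_condExp_mul_of_stronglyMeasurable hf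
    ((integrable_toReal_rnDeriv_mul_iff hμν).2 hfμ) Measure.integrable_toReal_rnDeriv

end RadonNikodym

section LikelihoodRatios

variable {Θ : Type*} (P0 : Measure X) (P : Θ → Measure X)

/-- The space `S_m` of the paper. -/
def condDensitySpan (m : MeasurableSpace X) : Submodule ℝ (X → ℝ) :=
  Submodule.span ℝ {h | ∃ θ, h = P0[fun x => ((P θ).rnDeriv P0 x).toReal | m]}

variable {P0 P} [IsFiniteMeasure P0] [∀ θ, IsFiniteMeasure (P θ)]

theorem condDensitySpan_le_integralMulAnnihilator (hm : m ≤ m₀) (hac : ∀ θ, P θ ≪ P0)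
    {Y : X → ℝ} (hY : StronglyMeasurable[m] Y) (hYint : ∀ θ, Integrable Y (P θ))
    (hYθ : ∀ θ, ∫ x, Y x ∂(P θ) = 0) :
    condDensitySpan P0 P m ≤ integralMulAnnihilator P0 Y := by
  refine Submodule.span_le.2 ?_
  rintro _ ⟨θ, rfl⟩
  exact ⟨integrable_condExp_rnDeriv_mul (hac θ) hY (hYint θ),
    (integral_eq_integral_condExp_rnDeriv_mul (hac θ) hm hY (hYint θ)).symm.trans (hYθ θ)⟩

theorem integral_condExp_eq_zero_of_condDensitySpan (hm' : m' ≤ m) (hm : m ≤ m₀)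
    (hac : ∀ θ, P θ ≪ P0)
    (hspan : ∀ θ, ∃ g ∈ condDensitySpan P0 P m,
      P0[fun x => ((P θ).rnDeriv P0 x).toReal | m'] =ᵐ[P0] g)
    {Y : X → ℝ} (hY : StronglyMeasurable[m] Y) {C : ℝ} (hYC : ∀ᵐ x ∂P0, |Y x| ≤ C)
    (hYθ : ∀ θ, ∫ x, Y x ∂(P θ) = 0) (θ : Θ) :
    ∫ x, P0[Y | m'] x ∂(P θ) = 0 := by
  have hm'₀ := hm'.trans hm
  have hYsm : AEStronglyMeasurable Y P0 := (hY.mono hm).aestronglyMeasurable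
  have hYint (θ) : Integrable Y (P θ) :=
    integrable_of_ae_abs_le (hac θ) (hY.mono hm).aestronglyMeasurable hYC
  obtain ⟨g, hg, hWg⟩ := hspan θ
  set W := P0[fun x => ((P θ).rnDeriv P0 x).toReal | m']
  set Z := P0[Y | m']
  have hZint : Integrable Z (P θ) :=
    integrable_of_ae_abs_le (hac θ) (stronglyMeasurable_condExp.mono hm'₀).aestronglyMeasurable
      (ae_bdd_abs_condExp_of_ae_bdd_abs hYC)
  have hYW : Integrable (Y * W) P0 :=
    integrable_condExp.bdd_mul hYsm (by simpa only [Real.norm_eq_abs] using hYC)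
  calc ∫ x, Z x ∂(P θ)
      = ∫ x, W x * Z x ∂P0 :=
        integral_eq_integral_condExp_rnDeriv_mul (hac θ) hm'₀ stronglyMeasurable_condExp hZint
    _ = ∫ x, Z x * W x ∂P0 := integral_congr_ae (.of_forall fun _ => mul_comm _ _)
    _ = ∫ x, Y x * W x ∂P0 :=
        integral_condExp_mul_of_stronglyMeasurable hm'₀ stronglyMeasurable_condExp hYW
          (integrable_of_ae_abs_le .rfl hYsm hYC)
    _ = ∫ x, g x * Y x ∂P0 :=
        integral_congr_ae (hWg.mono fun x hx => by dsimp only; rw [hx, mul_comm])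
    _ = 0 := (condDensitySpan_le_integralMulAnnihilator hm hac hY hYint hYθ hg).2

end LikelihoodRatios

end MeasureTheory

/-- Proposition 2: given a convergent filtration `(F_k)` in `B₀` whose spans of
conditional likelihood ratios are contained (up to a.e. equality) in that of `B₀`,
the sub-σ-field `B₀` is boundedly complete iff each `F_k` is. -/
theorem boundedly_complete_iff_filtration
    {X : Type*} {m : MeasurableSpace X} {Θ : Type*}
    (P0 : Measure X) [IsProbabilityMeasure P0]
    (P : Θ → Measure X) [∀ θ, IsProbabilityMeasure (P θ)]
    (hac : ∀ θ, P θ ≪ P0)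
    (B0 : MeasurableSpace X) (hB0 : B0 ≤ m)
    (F : ℕ → MeasurableSpace X) (hFmono : Monotone F)
    (hFle : ∀ k, F k ≤ B0) (hFgen : (⨆ k, F k) = B0)
    (hspan : ∀ k : ℕ, ∀ g ∈ Submodule.span ℝ
        {h : X → ℝ | ∃ θ : Θ,
          h = P0[fun x => ((P θ).rnDeriv P0 x).toReal | F k]},
      ∃ g' ∈ Submodule.span ℝ
        {h : X → ℝ | ∃ θ : Θ,
          h = P0[fun x => ((P θ).rnDeriv P0 x).toReal | B0]},
        g =ᵐ[P0] g') :
    (∀ Y : X → ℝ, Measurable[B0] Y → (∃ M : ℝ, ∀ᵐ x ∂P0, |Y x| ≤ M) →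
        (∀ θ : Θ, ∫ x, Y x ∂(P θ) = 0) → Y =ᵐ[P0] 0)
      ↔ (∀ k : ℕ, ∀ Y : X → ℝ, Measurable[F k] Y →
          (∃ M : ℝ, ∀ᵐ x ∂P0, |Y x| ≤ M) →
          (∀ θ : Θ, ∫ x, Y x ∂(P θ) = 0) → Y =ᵐ[P0] 0) := by
  refine ⟨fun hB0c k Y hY => hB0c Y (hY.mono (hFle k) le_rfl),
    fun hFc Y hY ⟨M, hM⟩ hYθ => ?_⟩
  have (θ : Θ) : IsFiniteMeasure (P θ) := inferInstance
  let ℱ : Filtration ℕ m := ⟨F, hFmono, fun k => (hFle k).trans hB0⟩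
  have hYℱ : StronglyMeasurable[⨆ k, ℱ k] Y := by
    rw [show (⨆ k, ℱ k) = B0 from hFgen]
    exact hY.stronglyMeasurable
  refine ae_eq_zero_of_forall_condExp_ae_eq_zero ℱ
    (integrable_of_ae_abs_le .rfl (hY.mono hB0 le_rfl).aestronglyMeasurable hM) hYℱ fun k => ?_
  exact hFc k _ stronglyMeasurable_condExp.measurable ⟨M, ae_bdd_abs_condExp_of_ae_bdd_abs hM⟩
    (integral_condExp_eq_zero_of_condDensitySpan (hFle k) hB0 hac
      (fun θ => hspan k _ (Submodule.subset_span ⟨θ, rfl⟩)) hY.stronglyMeasurable hM hYθ)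
end
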